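/- Let V be a finite-dimensional real inner product space, Ω ⊆ V a nonempty proper open convex cone, and H ⊆ V a linear subspace with H ∩ closure(Ω) = {0}. Then (closure(Ω) + H) ∩ (−(closure(Ω) + H)) = H. -/

import Mathlib

open Set Filter
open scoped Pointwise RealInnerProductSpace

/-- A subset `C` of a real vector space is a cone if `t • x ∈ C` for all `x ∈ C`, `t > 0`. -/
def IsCone {V : Type*} [AddCommGroup V] [Module ℝ V] (C : Set V) : Prop :=
  ∀ x ∈ C, ∀ t : ℝ, 0 < t → t • x ∈ C

/-- The open dual cone of an open cone `Ω` with respect to the inner product. -/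
def openDualCone {V : Type*} [NormedAddCommGroup V] [InnerProductSpace ℝ V] (Ω : Set V) :
    Set V :=
  {v | ∀ ω ∈ closure Ω, ω ≠ 0 → 0 < ⟪v, ω⟫}

/-!
A closed convex cone `K = closure Ω` is closed under addition. If `v = a + h = -(b + h')` with
`a, b ∈ K` and `h, h' ∈ H`, then `a + b = -(h + h')` lies in `K ∩ H = {0}`, so `a = -b` lies in
`K ∩ -K = {0}` and `v = h ∈ H`.
-/

theorem IsCone.closure {E : Type*} [AddCommGroup E] [Module ℝ E] [TopologicalSpace E]
    [ContinuousConstSMul ℝ E] {C : Set E} (hC : IsCone C) : IsCone (closure C) :=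
  fun _ hx t ht => MapsTo.closure (fun y hy => hC y hy t ht) (continuous_const_smul t) hx

theorem IsCone.add_mem_of_convex {E : Type*} [AddCommGroup E] [Module ℝ E] {C : Set E}
    (hC : IsCone C) (hconv : Convex ℝ C) {x y : E} (hx : x ∈ C) (hy : y ∈ C) : x + y ∈ C := by
  have hmid : (1 / 2 : ℝ) • x + (1 / 2 : ℝ) • y ∈ C :=
    hconv hx hy (by norm_num) (by norm_num) (by norm_num)
  simpa [smul_add, smul_smul] using hC _ hmid 2 two_pos

theorem inter_neg_add_addSubgroup_eq {G : Type*} [AddCommGroup G] {K : Set G}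
    (H : AddSubgroup G) (hadd : ∀ a ∈ K, ∀ b ∈ K, a + b ∈ K) (hpointed : K ∩ -K = {0})
    (hH : (H : Set G) ∩ K = {0}) :
    (K + H) ∩ -(K + H) = H := by
  have hzero : (0 : G) ∈ K := (hH.symm.subset rfl).2
  apply Subset.antisymm
  · rintro _ ⟨⟨a, ha, h, hh, rfl⟩, b, hb, h', hh', heq⟩
    beta_reduce at heq
    have hsum : a + b = -(h + h') :=
      calc a + b = (b + h') + a - h' := by abel
        _ = -(h + h') := by rw [heq]; abel
    have hab : a + b = 0 := by
      have : a + b ∈ (H : Set G) ∩ K :=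
        ⟨hsum ▸ H.neg_mem (H.add_mem hh hh'), hadd a ha b hb⟩
      simpa [hH] using this
    have ha : a = 0 := by
      have : a ∈ K ∩ -K := ⟨ha, by rwa [Set.mem_neg, neg_eq_of_add_eq_zero_right hab]⟩
      simpa [hpointed] using this
    simpa [ha] using hh
  · intro h hh
    exact ⟨⟨0, hzero, h, hh, zero_add h⟩, 0, hzero, -h, H.neg_mem hh, by simp⟩

theorem stmt_14_general {V : Type*} [NormedAddCommGroup V] [InnerProductSpace ℝ V]
    (Ω : Set V) (hconv : Convex ℝ Ω)
    (hcone : IsCone Ω) (hproper : closure Ω ∩ -closure Ω = {0})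
    (H : Submodule ℝ V) (hH : (H : Set V) ∩ closure Ω = {0}) :
    (closure Ω + (H : Set V)) ∩ -(closure Ω + (H : Set V)) = (H : Set V) :=
  inter_neg_add_addSubgroup_eq H.toAddSubgroup
    (fun _ ha _ hb => hcone.closure.add_mem_of_convex hconv.closure ha hb) hproper hH

theorem stmt_14 {V : Type*} [NormedAddCommGroup V] [InnerProductSpace ℝ V]
    [FiniteDimensional ℝ V]
    (Ω : Set V) (hne : Ω.Nonempty) (hopen : IsOpen Ω) (hconv : Convex ℝ Ω)
    (hcone : IsCone Ω) (hproper : closure Ω ∩ -closure Ω = {0})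
    (H : Submodule ℝ V) (hH : (H : Set V) ∩ closure Ω = {0}) :
    (closure Ω + (H : Set V)) ∩ -(closure Ω + (H : Set V)) = (H : Set V) :=
  stmt_14_general Ω hconv hcone hproper H hH
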